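/- Let V be a finite-dimensional real inner product space, U ⊆ V convex and compact, X a set, f : X × U → ℝ affine in the second argument, and p̂ ∈ relint(U). If x* maximizes x ↦ f(x,p̂) over the set X^RO of robustly optimal solutions, then x* is Pareto robustly optimal. -/

import Mathlib

/-!
A point `y` dominating `x⋆` on `U` is again robustly optimal, since its worst case over `U` is
at least that of `x⋆`. The gap `f(y,·) - f(x⋆,·)` is affine and nonnegative on `U`, and positive
at some `p̄ ∈ U`; as `p̂` is relatively interior, the segment from `p̄` through `p̂` extends inside
`U` beyond `p̂`, so the gap is positive at `p̂` as well, contradicting the maximality of `x⋆`.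
-/

open Set Filter Topology

theorem eventually_lineMap_mem_of_mem_intrinsicInterior {V : Type*} [AddCommGroup V] [Module ℝ V]
    [TopologicalSpace V] [IsTopologicalAddGroup V] [ContinuousSMul ℝ V] {U : Set V} {q x : V}
    (hq : q ∈ affineSpan ℝ U) (hx : x ∈ intrinsicInterior ℝ U) :
    ∀ᶠ t in 𝓝 (1 : ℝ), AffineMap.lineMap q x t ∈ U := by
  obtain ⟨y, hy, rfl⟩ := mem_intrinsicInterior.1 hx
  let C : ℝ → affineSpan ℝ U := fun t => ⟨AffineMap.lineMap q y t, AffineMap.lineMap_mem t hq y.2⟩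
  have hC : Continuous C := AffineMap.lineMap_continuous.subtype_mk _
  have hC1 : C 1 = y := Subtype.ext (AffineMap.lineMap_apply_one _ _)
  exact (hC.tendsto 1).eventually (mem_interior_iff_mem_nhds.1 (hC1 ▸ hy))

theorem AffineMap.pos_of_mem_intrinsicInterior {V : Type*} [AddCommGroup V] [Module ℝ V]
    [TopologicalSpace V] [IsTopologicalAddGroup V] [ContinuousSMul ℝ V] {U : Set V} {q x : V}
    (g : V →ᵃ[ℝ] ℝ) (hg : ∀ p ∈ U, 0 ≤ g p) (hq : q ∈ U) (hgq : 0 < g q)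
    (hx : x ∈ intrinsicInterior ℝ U) : 0 < g x := by
  by_contra! hgx
  obtain ⟨t, htU, ht⟩ := ((eventually_lineMap_mem_of_mem_intrinsicInterior
    (subset_affineSpan ℝ U hq) hx).filter_mono nhdsWithin_le_nhds |>.and
      (self_mem_nhdsWithin : Ioi (1 : ℝ) ∈ 𝓝[>] 1)).exists
  have hline : g (AffineMap.lineMap q x t) = (1 - t) * g q + t * g x := by
    rw [AffineMap.apply_lineMap, AffineMap.lineMap_apply_module, smul_eq_mul, smul_eq_mul]
  have hnonneg : 0 ≤ (1 - t) * g q + t * g x := hline ▸ hg _ htU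
  nlinarith

theorem csInf_image_le_csInf_image {α β : Type*} [ConditionallyCompleteLattice β]
    {s : Set α} {f g : α → β} (hs : s.Nonempty) (hf : BddBelow (f '' s))
    (hfg : ∀ a ∈ s, f a ≤ g a) : sInf (f '' s) ≤ sInf (g '' s) :=
  le_csInf (hs.image g) <| forall_mem_image.2 fun a ha =>
    (csInf_le hf (mem_image_of_mem f ha)).trans (hfg a ha)

theorem argmax_over_XRO_is_pro_general
    {V : Type*} [NormedAddCommGroup V] [InnerProductSpace ℝ V] [FiniteDimensional ℝ V]
    {X : Type*} (U : Set V) (hUcomp : IsCompact U)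
    (f : X → V → ℝ)
    (haff : ∀ x : X, ∃ g : V →ᵃ[ℝ] ℝ, ∀ p ∈ U, f x p = g p)
    (phat : V) (hphat : phat ∈ intrinsicInterior ℝ U)
    (XRO : Set X)
    (hXRO : XRO = {x : X | ∀ x' : X, sInf (f x' '' U) ≤ sInf (f x '' U)})
    (xstar : X) (hmem : xstar ∈ XRO)
    (hmax : ∀ x ∈ XRO, f x phat ≤ f xstar phat) :
    xstar ∈ XRO ∧
      ¬ ∃ y : X, (∀ p ∈ U, f xstar p ≤ f y p) ∧ ∃ pbar ∈ U, f xstar pbar < f y pbar := by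
  refine ⟨hmem, ?_⟩
  rintro ⟨y, hdom, pbar, hpbar, hlt⟩
  subst hXRO
  obtain ⟨gx, hgx⟩ := haff xstar
  obtain ⟨gy, hgy⟩ := haff y
  have hphatU : phat ∈ U := intrinsicInterior_subset hphat
  -- without this bound `sInf` would take its junk value and the comparison would fail
  have hbdd : BddBelow (f xstar '' U) := by
    rw [image_congr hgx]
    exact (hUcomp.image gx.continuous_of_finiteDimensional).bddBelow
  have hyRO : ∀ x', sInf (f x' '' U) ≤ sInf (f y '' U) := fun x' =>
    (hmem x').trans (csInf_image_le_csInf_image ⟨phat, hphatU⟩ hbdd hdom)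
  have hgap : 0 < (gy - gx) phat :=
    (gy - gx).pos_of_mem_intrinsicInterior
      (fun p hp => by simpa [← hgx p hp, ← hgy p hp] using hdom p hp)
      hpbar (by simpa [← hgx pbar hpbar, ← hgy pbar hpbar] using hlt) hphat
  exact (hmax y hyRO).not_gt <| by
    simpa [← hgx phat hphatU, ← hgy phat hphatU] using hgap

/-- A maximizer of `x ↦ f(x,p̂)` over the set of robustly optimal
solutions, for `p̂ ∈ relint U`, is Pareto robustly optimal. -/
theorem argmax_over_XRO_is_pro
    {V : Type*} [NormedAddCommGroup V] [InnerProductSpace ℝ V] [FiniteDimensional ℝ V]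
    {X : Type*} (U : Set V) (hUconv : Convex ℝ U) (hUcomp : IsCompact U)
    (f : X → V → ℝ)
    (haff : ∀ x : X, ∃ g : V →ᵃ[ℝ] ℝ, ∀ p ∈ U, f x p = g p)
    (phat : V) (hphat : phat ∈ intrinsicInterior ℝ U)
    (XRO : Set X)
    (hXRO : XRO = {x : X | ∀ x' : X, sInf (f x' '' U) ≤ sInf (f x '' U)})
    (xstar : X) (hmem : xstar ∈ XRO)
    (hmax : ∀ x ∈ XRO, f x phat ≤ f xstar phat) :
    xstar ∈ XRO ∧
      ¬ ∃ y : X, (∀ p ∈ U, f xstar p ≤ f y p) ∧ ∃ pbar ∈ U, f xstar pbar < f y pbar :=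
  argmax_over_XRO_is_pro_general U hUcomp f haff phat hphat XRO hXRO xstar hmem hmax
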